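/- arXiv:1312.0190 — 2 statements merged into one kernel-verified Lean document; each statement's English description precedes it below -/
import Mathlib

section
/- Let H be a finite directed multigraph with arcs labeled by elements of a group G, with a start vertex s and a set of final vertices Z. Suppose (a) every walk from s to a vertex in Z whose intermediate vertices are pairwise distinct has label e, and (b) for every vertex q from which some vertex of Z is reachable, every walk π₁ from s to q with distinct vertices and every closed walk π₂ at q with distinct intermediate vertices satisfy l(π₁)·l(π₂)·l(π₁)⁻¹ = e. Then every walk from s to a vertex in Z has label e. -/
/-- A walk in a directed multigraph with edge set `E`, source/target maps
`src tgt : E → V`: `IsWalk src tgt a b l` means the list of arcs `l` forms a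
walk from vertex `a` to vertex `b`. -/
inductive IsWalk {V E : Type*} (src tgt : E → V) : V → V → List E → Prop
  | nil (v : V) : IsWalk src tgt v v []
  | cons {e : E} {w : V} {l : List E} (h : IsWalk src tgt (tgt e) w l) :
      IsWalk src tgt (src e) w (e :: l)

/-- `AlmostNodup l`: all entries of `l` are pairwise distinct, except that
possibly the first and last entries coincide. -/
def AlmostNodup {V : Type*} (l : List V) : Prop :=
  l.dropLast.Nodup ∧ l.tail.Nodup

/-!
Induct on the length of the walk. A walk whose vertices are pairwise distinct has label `e`
by (a). Otherwise cut the walk at the first repeated vertex `q`: it splits as `α β γ` with `α`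
a simple walk from `s` to `q`, `β` a nonempty closed walk at `q` with distinct intermediate
vertices, and `γ` a walk from `q` into `Z`. By (b), `l(β)` is conjugate to `e`, hence `e`, so
`l(αβγ) = l(αγ)`, and `αγ` is a shorter walk from `s` into `Z`.
-/

theorem List.Nodup.almostNodup {V : Type*} {l : List V} (h : l.Nodup) : AlmostNodup l :=
  ⟨h.sublist l.dropLast_sublist, h.sublist l.tail_sublist⟩

theorem almostNodup_cons_append_singleton {V : Type*} {x : V} {l : List V}
    (h : (x :: l).Nodup) : AlmostNodup (x :: l ++ [x]) := by
  refine ⟨by rwa [List.dropLast_concat], ?_⟩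
  rw [List.tail_append_of_ne_nil (List.cons_ne_nil x l), List.tail_cons, List.nodup_append]
  obtain ⟨hx, hl⟩ := List.nodup_cons.1 h
  exact ⟨hl, List.nodup_singleton x, fun y hy z hz => by
    rw [List.mem_singleton.1 hz]; exact ne_of_mem_of_not_mem hy hx⟩

namespace IsWalk

variable {V E : Type*} {src tgt : E → V}

theorem append {a b c : V} {l₁ l₂ : List E} (h₁ : IsWalk src tgt a b l₁)
    (h₂ : IsWalk src tgt b c l₂) : IsWalk src tgt a c (l₁ ++ l₂) := by
  induction h₁ with
  | nil => exact h₂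
  | cons _ ih => exact cons (ih h₂)

theorem singleton (e : E) : IsWalk src tgt (src e) (tgt e) [e] :=
  cons (nil _)

theorem eq_of_nil {a b : V} (h : IsWalk src tgt a b []) : a = b := by
  generalize hl : ([] : List E) = l at h
  induction h with
  | nil => rfl
  | cons => simp at hl

theorem cons_iff {a b : V} {e : E} {l : List E} :
    IsWalk src tgt a b (e :: l) ↔ src e = a ∧ IsWalk src tgt (tgt e) b l := by
  refine ⟨fun h => ?_, fun ⟨he, h⟩ => he ▸ cons h⟩
  generalize hl : e :: l = l' at h
  induction h with
  | nil => simp at hl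
  | cons h =>
    obtain ⟨rfl, rfl⟩ := List.cons_eq_cons.1 hl
    exact ⟨rfl, h⟩

theorem exists_of_append {a c : V} {l₁ l₂ : List E} (h : IsWalk src tgt a c (l₁ ++ l₂)) :
    ∃ b, IsWalk src tgt a b l₁ ∧ IsWalk src tgt b c l₂ := by
  induction l₁ generalizing a with
  | nil => exact ⟨a, nil a, h⟩
  | cons e l₁ ih =>
    obtain ⟨rfl, htail⟩ := cons_iff.1 h
    obtain ⟨b, h₁, h₂⟩ := ih htail
    exact ⟨b, cons h₁, h₂⟩

theorem of_append_singleton {a c : V} {l : List E} {e : E}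
    (h : IsWalk src tgt a c (l ++ [e])) : IsWalk src tgt a (src e) l ∧ tgt e = c := by
  obtain ⟨b, hl, he⟩ := h.exists_of_append
  obtain ⟨rfl, hnil⟩ := cons_iff.1 he
  exact ⟨hl, hnil.eq_of_nil⟩

theorem end_mem {a b : V} {l : List E} (h : IsWalk src tgt a b l) : b ∈ a :: l.map tgt := by
  induction h with
  | nil => exact List.mem_cons_self
  | cons _ ih => exact List.mem_cons_of_mem _ ih

theorem exists_split_of_mem {a b q : V} {l : List E} (h : IsWalk src tgt a b l)
    (hq : q ∈ a :: l.map tgt) :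
    ∃ α β, l = α ++ β ∧ IsWalk src tgt a q α ∧ IsWalk src tgt q b β := by
  induction h with
  | nil v =>
    obtain rfl : q = v := by simpa using hq
    exact ⟨[], [], rfl, nil q, nil q⟩
  | @cons e w l h ih =>
    rcases List.mem_cons.1 hq with rfl | hq
    · exact ⟨[], e :: l, rfl, nil _, cons h⟩
    · obtain ⟨α, β, rfl, hα, hβ⟩ := ih hq
      exact ⟨e :: α, β, rfl, cons hα, hβ⟩

theorem nodup_or_exists_cycle {a b : V} {π : List E} (h : IsWalk src tgt a b π) :
    (a :: π.map tgt).Nodup ∨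
      ∃ q α β γ, π = α ++ β ++ γ ∧ β ≠ [] ∧
        IsWalk src tgt a q α ∧ (a :: α.map tgt).Nodup ∧
        IsWalk src tgt q q β ∧ AlmostNodup (q :: β.map tgt) ∧
        IsWalk src tgt q b γ := by
  induction π using List.reverseRecOn generalizing b with
  | nil => exact Or.inl (List.nodup_singleton a)
  | append_singleton l e ih =>
    obtain ⟨hl, rfl⟩ := h.of_append_singleton
    rcases ih hl with hnd | ⟨q, α, β, γ, rfl, hβ, hα, hαnd, hβw, hβnd, hγ⟩
    · by_cases hmem : tgt e ∈ a :: l.map tgt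
      -- `e` returns to a vertex of the simple walk `l`, closing a simple cycle with its tail.
      · obtain ⟨α, β, rfl, hα, hβ⟩ := hl.exists_split_of_mem hmem
        have hvert : a :: (α ++ β).map tgt = (a :: α.map tgt) ++ β.map tgt := by simp
        rw [hvert] at hnd
        have hcyc : (tgt e :: β.map tgt).Nodup :=
          hnd.sublist ((List.singleton_sublist.2 hα.end_mem).append (List.Sublist.refl _))
        refine Or.inr ⟨tgt e, α, β ++ [e], [], by simp, by simp, hα,
          hnd.sublist (List.sublist_append_left _ _), hβ.append (singleton e), ?_,
          nil _⟩
        simpa using almostNodup_cons_append_singleton hcyc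
      · left
        rw [List.map_append, List.map_singleton, ← List.cons_append]
        exact hnd.append (List.nodup_singleton _) (by simpa using hmem)
    · exact Or.inr ⟨q, α, β, γ ++ [e], by simp, hβ, hα, hαnd, hβw, hβnd,
        hγ.append (singleton e)⟩

end IsWalk

theorem stmt_12_general {V E G : Type*} [Group G]
    (src tgt : E → V) (lab : E → G) (s : V) (Z : Set V)
    (ha : ∀ z ∈ Z, ∀ π : List E, IsWalk src tgt s z π →
      AlmostNodup (s :: π.map tgt) → (π.map lab).prod = 1)
    (hb : ∀ q : V, (∃ z ∈ Z, ∃ ρ : List E, IsWalk src tgt q z ρ) →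
      ∀ π₁ : List E, IsWalk src tgt s q π₁ → AlmostNodup (s :: π₁.map tgt) →
      ∀ π₂ : List E, IsWalk src tgt q q π₂ → AlmostNodup (q :: π₂.map tgt) →
      (π₁.map lab).prod * (π₂.map lab).prod * ((π₁.map lab).prod)⁻¹ = 1) :
    ∀ z ∈ Z, ∀ π : List E, IsWalk src tgt s z π → (π.map lab).prod = 1 := by
  intro z hz π hπ
  induction hn : π.length using Nat.strong_induction_on generalizing π with
  | _ n ih =>
    rcases hπ.nodup_or_exists_cycle with hnd | ⟨q, α, β, γ, rfl, hβ, hα, hαnd, hβw, hβnd, hγ⟩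
    · exact ha z hz π hπ hnd.almostNodup
    · have hcycle : (β.map lab).prod = 1 :=
        conj_eq_one_iff.1 (hb q ⟨z, hz, γ, hγ⟩ α hα hαnd.almostNodup β hβw hβnd)
      have hshorter : (α ++ γ).length < n := by
        subst hn; simpa using List.length_pos_iff.2 hβ
      simpa [hcycle] using ih _ hshorter (α ++ γ) (hα.append hγ) rfl

/-- Let `H` be a finite directed multigraph with arcs labeled in a
group `G`, start vertex `s`, final vertex set `Z`. If (a) every walk from `s`
to `Z` whose vertices are pairwise distinct (except possibly initial = final)
has label `e`, and (b) for every vertex `q` from which `Z` is reachable, every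
such simple walk `π₁` from `s` to `q` and every closed walk `π₂` at `q` with
distinct intermediate vertices satisfy `l(π₁)·l(π₂)·l(π₁)⁻¹ = e`, then every
walk from `s` into `Z` has label `e`. -/
theorem stmt_12 {V E G : Type*} [Finite V] [Finite E] [Group G]
    (src tgt : E → V) (lab : E → G) (s : V) (Z : Set V)
    (ha : ∀ z ∈ Z, ∀ π : List E, IsWalk src tgt s z π →
      AlmostNodup (s :: π.map tgt) → (π.map lab).prod = 1)
    (hb : ∀ q : V, (∃ z ∈ Z, ∃ ρ : List E, IsWalk src tgt q z ρ) →
      ∀ π₁ : List E, IsWalk src tgt s q π₁ → AlmostNodup (s :: π₁.map tgt) →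
      ∀ π₂ : List E, IsWalk src tgt q q π₂ → AlmostNodup (q :: π₂.map tgt) →
      (π₁.map lab).prod * (π₂.map lab).prod * ((π₁.map lab).prod)⁻¹ = 1) :
    ∀ z ∈ Z, ∀ π : List E, IsWalk src tgt s z π → (π.map lab).prod = 1 :=
  stmt_12_general src tgt lab s Z ha hb
end

section
/- Let Γ be a linear grammar over Σ with transition diagram H labeled in U_G = G × G (via a monoid homomorphism Σ* → G applied to each label component), where G is a group with identity e. Then L(Γ) ⊆ L(G) = {ω ∈ Σ* | φ(ω) = e} if and only if f_d(l_U(D)) ⊆ {e}, where D is the set of all walks in H from A₁ to the sink A_{n+1}, l_U is the U_G-valued label, and f_d(x,y) = x·y in G. -/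
/-- A linear grammar over terminal alphabet `A` with `n` variables. -/
structure LinGrammar (A : Type*) (n : ℕ) where
  P1 : Set (Fin n × List A × Fin n × List A)
  P2 : Set (Fin n × List A)
  start : Fin n

/-- `Derives Γ i w`: the word `w` is derivable from the variable `A_i`. -/
inductive Derives {A : Type*} {n : ℕ} (Γ : LinGrammar A n) : Fin n → List A → Prop
  | base {i : Fin n} {α : List A} : (i, α) ∈ Γ.P2 → Derives Γ i α
  | step {i : Fin n} {α : List A} {j : Fin n} {β : List A} {w : List A} :
      (i, α, j, β) ∈ Γ.P1 → Derives Γ j w → Derives Γ i (α ++ w ++ β)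

/-- `WalkLabelU Γ φ i p`: `p ∈ U_G = G × G` is the `⋄`-label of some walk in the
transition diagram `H` from vertex `A_i` to the sink `A_{n+1}`, where a
production `A_i → α A_j β` gives an arc labeled `(φ α, φ β)`, a production
`A_i → α` gives an arc to the sink labeled `(φ α, e)`, and labels multiply by
`(x,y) ⋄ (z,t) = (xz, ty)`. -/
inductive WalkLabelU {A G : Type*} [Group G] {n : ℕ} (Γ : LinGrammar A n)
    (φ : List A → G) : Fin n → G × G → Prop
  | base {i : Fin n} {α : List A} : (i, α) ∈ Γ.P2 → WalkLabelU Γ φ i (φ α, 1)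
  | step {i : Fin n} {α : List A} {j : Fin n} {β : List A} {p : G × G} :
      (i, α, j, β) ∈ Γ.P1 → WalkLabelU Γ φ j p →
      WalkLabelU Γ φ i (φ α * p.1, p.2 * φ β)

/-
A derivation `A_i ⇒ α₁ A_j β₁ ⇒ ⋯ ⇒ α₁ ⋯ αₖ γ βₖ ⋯ β₁` and the walk through the arcs of the same
productions carry the same data: the walk's `⋄`-label is `(φ(α₁ ⋯ αₖ γ), φ(βₖ ⋯ β₁))`, whose
product is `φ` of the derived word. So `f_d ∘ l_U` maps the walks from `A₁` onto `φ(L(Γ))`, and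
`L(Γ) ⊆ φ⁻¹(e)` says exactly that this image is `{e}`.
-/

section

variable {A G : Type*} [Group G] {n : ℕ} {Γ : LinGrammar A n} {φ : List A → G}

theorem Derives.exists_walkLabelU (hφm : ∀ u v : List A, φ (u ++ v) = φ u * φ v)
    {i : Fin n} {w : List A} (h : Derives Γ i w) :
    ∃ p : G × G, WalkLabelU Γ φ i p ∧ p.1 * p.2 = φ w := by
  induction h with
  | base hP => exact ⟨_, .base hP, mul_one _⟩
  | step hP _ ih =>
    obtain ⟨p, hp, hpw⟩ := ih
    exact ⟨_, .step hP hp, by simp only [hφm, ← hpw, mul_assoc]⟩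

theorem WalkLabelU.exists_derives (hφm : ∀ u v : List A, φ (u ++ v) = φ u * φ v)
    {i : Fin n} {p : G × G} (h : WalkLabelU Γ φ i p) :
    ∃ w : List A, Derives Γ i w ∧ φ w = p.1 * p.2 := by
  induction h with
  | base hP => exact ⟨_, .base hP, (mul_one _).symm⟩
  | step hP _ ih =>
    obtain ⟨w, hw, hφw⟩ := ih
    exact ⟨_, .step hP hw, by simp only [hφm, hφw, mul_assoc]⟩

theorem image_derives_eq_image_walkLabelU (hφm : ∀ u v : List A, φ (u ++ v) = φ u * φ v)
    (i : Fin n) :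
    φ '' {w | Derives Γ i w} = (fun p : G × G => p.1 * p.2) '' {p | WalkLabelU Γ φ i p} := by
  ext g
  constructor
  · rintro ⟨w, hw, rfl⟩
    exact hw.exists_walkLabelU hφm
  · rintro ⟨p, hp, rfl⟩
    exact hp.exists_derives hφm

end

theorem stmt_17_general {A G : Type*} [Group G] {n : ℕ} (Γ : LinGrammar A n)
    (φ : List A → G)
    (hφm : ∀ u v : List A, φ (u ++ v) = φ u * φ v) :
    ({w : List A | Derives Γ Γ.start w} ⊆ {w : List A | φ w = 1}) ↔
      (∀ p : G × G, WalkLabelU Γ φ Γ.start p → p.1 * p.2 = 1) := by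
  calc {w | Derives Γ Γ.start w} ⊆ {w | φ w = 1}
      ↔ φ '' {w | Derives Γ Γ.start w} ⊆ {1} := by
        rw [Set.image_subset_iff]; rfl
    _ ↔ (fun p : G × G => p.1 * p.2) '' {p | WalkLabelU Γ φ Γ.start p} ⊆ {1} := by
      rw [image_derives_eq_image_walkLabelU hφm]
    _ ↔ ∀ p : G × G, WalkLabelU Γ φ Γ.start p → p.1 * p.2 = 1 := Set.image_subset_iff

/-- `L(Γ) ⊆ L(G) = {ω | φ(ω) = e}` iff `f_d(l_U(D)) ⊆ {e}`, where
`D` is the set of all walks from `A₁` to the sink and `f_d(x,y) = x·y`. -/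
theorem stmt_17 {A G : Type*} [Group G] {n : ℕ} (Γ : LinGrammar A n)
    (φ : List A → G) (hφ1 : φ [] = 1)
    (hφm : ∀ u v : List A, φ (u ++ v) = φ u * φ v) :
    ({w : List A | Derives Γ Γ.start w} ⊆ {w : List A | φ w = 1}) ↔
      (∀ p : G × G, WalkLabelU Γ φ Γ.start p → p.1 * p.2 = 1) :=
  stmt_17_general Γ φ hφm
end
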